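/- arXiv:1202.3637 — 5 statements merged into one kernel-verified Lean document; each statement's English description precedes it below -/
import Mathlib

section
/- Let D ≥ 3 and p be natural numbers, and let F : ℕ → ℕ be finitely supported with F(0) = 0. Suppose Σ_{s≥1} F(s) = (D(D−1)/2)·p + D and Σ_{s≥1} s·F(s) = (D(D+1)/2)·p. Then F(1) = 2D + Σ_{s≥3} (s−2)·F(s) + (D(D−3)/2)·p, and in particular F(1) ≥ 1. -/
/-- Counting argument showing every `(D+1)`-colored graph of vanishing degree has a
face with exactly two vertices: if `F s` counts faces with `2s` vertices, `F 0 = 0`,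
`∑ F s = D(D-1)/2 · p + D` and `∑ s · F s = D(D+1)/2 · p`, then
`F 1 = 2D + ∑_{s≥3} (s-2) F s + D(D-3)/2 · p ≥ 1`. -/
theorem stmt_3 (D p : ℕ) (hD : 3 ≤ D) (F : ℕ →₀ ℕ) (hF0 : F 0 = 0)
    (h1 : ∑ s ∈ F.support, F s = D * (D - 1) / 2 * p + D)
    (h2 : ∑ s ∈ F.support, s * F s = D * (D + 1) / 2 * p) :
    F 1 = 2 * D + (∑ s ∈ F.support.filter (fun s => 3 ≤ s), (s - 2) * F s)
        + D * (D - 3) / 2 * p ∧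
    1 ≤ F 1 := by
  set S3 : ℕ := ∑ s ∈ F.support.filter (fun s => 3 ≤ s), (s - 2) * F s with hS3
  clear_value S3
  -- Step 1: the purely combinatorial identity in ℕ
  have hF1 : F 1 = ∑ s ∈ F.support, (if s = 1 then F s else 0) := by
    rw [Finset.sum_ite_eq' F.support 1 F]
    by_cases h : (1 : ℕ) ∈ F.support
    · simp [h]
    · simp [h, Finsupp.notMem_support_iff.mp h]
  have hS3' : S3 = ∑ s ∈ F.support, (if 3 ≤ s then (s - 2) * F s else 0) := by
    rw [hS3, Finset.sum_filter]
  have key : (∑ s ∈ F.support, s * F s) + F 1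
      = 2 * (∑ s ∈ F.support, F s) + S3 := by
    rw [hF1, hS3', ← Finset.sum_add_distrib, Finset.mul_sum, ← Finset.sum_add_distrib]
    apply Finset.sum_congr rfl
    intro s hs
    have hs0 : s ≠ 0 := by
      intro h; rw [h] at hs; exact (Finsupp.mem_support_iff.mp hs) hF0
    match s, hs0 with
    | 1, _ => simp [two_mul]
    | 2, _ => simp
    | (n + 3), _ =>
      have h3 : (3 : ℕ) ≤ n + 3 := by omega
      have hne : (n + 3 : ℕ) ≠ 1 := by omega
      simp only [if_pos h3, if_neg hne]
      have : n + 3 - 2 = n + 1 := by omega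
      rw [this]; ring
  -- Step 2: arithmetic with the half-integers
  obtain ⟨d, rfl⟩ : ∃ d, D = d + 3 := ⟨D - 3, by omega⟩
  have e1 : d + 3 - 1 = d + 2 := by omega
  have e3 : d + 3 - 3 = d := by omega
  rw [e1] at h1
  rw [e3]
  obtain ⟨e, he⟩ : ∃ e, (d + 2) * (d + 3) = 2 * e := by
    rcases Nat.even_mul_succ_self (d + 2) with ⟨e, he⟩
    have h23 : d + 2 + 1 = d + 3 := rfl
    rw [h23] at he
    exact ⟨e, by omega⟩
  have hcomm : (d + 3) * (d + 2) = (d + 2) * (d + 3) := by ring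
  have hbexp : (d + 3) * (d + 3 + 1) = (d + 2) * (d + 3) + 2 * (d + 3) := by ring
  have hcexp : (d + 3) * d + 2 * (d + 3) = (d + 2) * (d + 3) := by ring
  have hda : (d + 3) * (d + 2) / 2 = e := by omega
  have hdb : (d + 3) * (d + 3 + 1) / 2 = e + (d + 3) := by omega
  obtain ⟨q, hq⟩ : ∃ q, e = q + (d + 3) := ⟨e - (d + 3), by omega⟩
  have hdc : (d + 3) * d / 2 = q := by omega
  rw [hda] at h1
  rw [hdb] at h2
  rw [hdc]
  have hmul : (e + (d + 3)) * p + q * p = 2 * (e * p) := by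
    rw [← Nat.add_mul, show e + (d + 3) + q = 2 * e by omega, Nat.mul_assoc]
  constructor
  · omega
  · omega
end

section
/- Let U : ℝ → ℝ, let g ∈ ℝ, and suppose U has derivative u′ at g (HasDerivAt), that U(g) ≠ 0, and that 2g·U(g)² + U(g) − 1 = 0. Then the function x ↦ U(x) + x·U(x)² − log U(x) has derivative U(g)² at g. -/
/-! The self-consistency equation says exactly that `∂f₀/∂U = 1 + 2gU - 1/U` vanishes at `U(g)`,
so by the chain rule only the explicit dependence of `f₀` on `g`, namely `∂f₀/∂g = U²`, survives. -/

open Real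

theorem hasDerivAt_add_mul_sq_sub_log {U : ℝ → ℝ} {u' g : ℝ} (hU : HasDerivAt U u' g)
    (hUg : U g ≠ 0) :
    HasDerivAt (fun x : ℝ => U x + x * U x ^ 2 - log (U x))
      (u' * (1 + 2 * g * U g - (U g)⁻¹) + U g ^ 2) g := by
  refine ((hU.add ((hasDerivAt_id g).mul (hU.pow 2))).sub (hU.log hUg)).congr_deriv ?_
  simp only [id, Pi.pow_apply]
  field_simp
  ring

theorem one_add_two_mul_sub_inv_eq_zero {g U : ℝ} (hU : U ≠ 0)
    (hsd : 2 * g * U ^ 2 + U - 1 = 0) : 1 + 2 * g * U - U⁻¹ = 0 := by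
  field_simp
  linear_combination hsd

/-- If `U` has derivative `u'` at `g`, `U g ≠ 0` and `2g·U(g)² + U(g) - 1 = 0`, then
`x ↦ U x + x·U(x)² - log U(x)` has derivative `U(g)²` at `g`. -/
theorem stmt_10 (U : ℝ → ℝ) (g u' : ℝ) (hU : HasDerivAt U u' g)
    (hUg : U g ≠ 0) (hsd : 2 * g * U g ^ 2 + U g - 1 = 0) :
    HasDerivAt (fun x : ℝ => U x + x * U x ^ 2 - Real.log (U x)) (U g ^ 2) g := by
  simpa [one_add_two_mul_sub_inv_eq_zero hUg hsd] using hasDerivAt_add_mul_sq_sub_log hU hUg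
end

section
/- Define f₀(g) := (3 + √(1+8g))/(2(1 + √(1+8g))) + log((1 + √(1+8g))/2) for g ≥ −1/8, so that f₀(−1/8) = 3/2 − log 2. Then, as g tends to −1/8 from the right, the quotient (f₀(g) − (3/2 − log 2) − 4·(g + 1/8)) / (g + 1/8)^{3/2} tends to −32√2/3. -/
open Filter Real Topology

/-! With `s = √(1 + 8g)` one has `g + 1/8 = s²/8`, so the denominator is `s³ / (16√2)`, while the
numerator becomes `1/(1+s) - 1 + log (1+s) - s²/2`. Expanding `log (1+s)` to third order, this is
`-(2/3) s³ + O(s⁴)`, whence the limit `16√2 · (-2/3)`. -/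

/-- Leading order free energy of the quartic melonic tensor model. -/
noncomputable def quarticFreeEnergy (g : ℝ) : ℝ :=
  (3 + Real.sqrt (1 + 8 * g)) / (2 * (1 + Real.sqrt (1 + 8 * g)))
    + Real.log ((1 + Real.sqrt (1 + 8 * g)) / 2)

lemma abs_log_one_add_sub_taylor_le {s : ℝ} (hs : |s| < 1) :
    |log (1 + s) - (s - s ^ 2 / 2 + s ^ 3 / 3)| ≤ |s| ^ 4 / (1 - |s|) := by
  have h := abs_log_sub_add_sum_range_le (x := -s) (by rwa [abs_neg]) 3
  simp only [Finset.sum_range_succ, Finset.sum_range_zero, abs_neg] at h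
  convert h using 2
  push_cast
  rw [sub_neg_eq_add]
  ring

lemma tendsto_log_one_add_sub_taylor_div_cube :
    Tendsto (fun s : ℝ => (log (1 + s) - (s - s ^ 2 / 2 + s ^ 3 / 3)) / s ^ 3) (𝓝 0) (𝓝 0) := by
  have hbound : Tendsto (fun s : ℝ => |s| / (1 - |s|)) (𝓝 0) (𝓝 0) := by
    have : ContinuousAt (fun s : ℝ => |s| / (1 - |s|)) 0 := by fun_prop (disch := norm_num)
    simpa using this.tendsto
  refine squeeze_zero_norm' ?_ hbound
  filter_upwards [Ioo_mem_nhds (by norm_num : (-1 : ℝ) < 0) one_pos] with s hs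
  have hs1 : |s| < 1 := abs_lt.mpr hs
  rw [norm_div, norm_pow, Real.norm_eq_abs, Real.norm_eq_abs]
  rcases eq_or_ne s 0 with rfl | hs0
  · simp
  rw [div_le_iff₀ (by positivity)]
  calc _ ≤ |s| ^ 4 / (1 - |s|) := abs_log_one_add_sub_taylor_le hs1
    _ = |s| / (1 - |s|) * |s| ^ 3 := by ring

lemma tendsto_inv_one_add_sub_one_add_log_one_add_sub_sq_div_cube :
    Tendsto (fun s : ℝ => (1 / (1 + s) - 1 + log (1 + s) - s ^ 2 / 2) / s ^ 3)
      (𝓝[≠] 0) (𝓝 (-2 / 3)) := by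
  have hrat : Tendsto (fun s : ℝ => (s - 2) / (3 * (1 + s))) (𝓝 0) (𝓝 (-2 / 3)) := by
    have : ContinuousAt (fun s : ℝ => (s - 2) / (3 * (1 + s))) 0 := by
      fun_prop (disch := norm_num)
    convert this.tendsto using 2
    norm_num
  have h := hrat.add tendsto_log_one_add_sub_taylor_div_cube
  rw [add_zero] at h
  refine (h.mono_left nhdsWithin_le_nhds).congr' ?_
  filter_upwards [self_mem_nhdsWithin,
    nhdsWithin_le_nhds (Ioi_mem_nhds (by norm_num : (-1 : ℝ) < 0))] with s hs0 hs1
  have : 1 + s ≠ 0 := by simp only [Set.mem_Ioi] at hs1; linarith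
  have : s ≠ 0 := hs0
  field_simp
  ring

lemma tendsto_sqrt_one_add_eight_mul :
    Tendsto (fun g : ℝ => √(1 + 8 * g)) (𝓝[>] (-1 / 8)) (𝓝[>] 0) := by
  refine tendsto_nhdsWithin_iff.mpr ⟨?_, ?_⟩
  · have : Tendsto (fun g : ℝ => √(1 + 8 * g)) (𝓝 (-1 / 8)) (𝓝 √(1 + 8 * (-1 / 8))) :=
      (by fun_prop : Continuous fun g : ℝ => √(1 + 8 * g)).continuousAt
    rw [show (1 : ℝ) + 8 * (-1 / 8) = 0 by norm_num, sqrt_zero] at this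
    exact this.mono_left nhdsWithin_le_nhds
  · filter_upwards [self_mem_nhdsWithin] with g (hg : -1 / 8 < g)
    exact sqrt_pos.mpr (by linarith)

lemma quarticFreeEnergy_neg_one_div_eight : quarticFreeEnergy (-1 / 8) = 3 / 2 - log 2 := by
  rw [quarticFreeEnergy, show (1 : ℝ) + 8 * (-1 / 8) = 0 by norm_num, sqrt_zero]
  norm_num
  rw [one_div, log_inv]
  ring

lemma quarticFreeEnergy_sub_eq {g : ℝ} (hg : -1 / 8 ≤ g) :
    quarticFreeEnergy g - (3 / 2 - log 2) - 4 * (g + 1 / 8) =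
      1 / (1 + √(1 + 8 * g)) - 1 + log (1 + √(1 + 8 * g)) - √(1 + 8 * g) ^ 2 / 2 := by
  have hs : 0 < 1 + √(1 + 8 * g) := by positivity
  rw [quarticFreeEnergy, log_div hs.ne' two_ne_zero, sq_sqrt (by linarith)]
  field_simp
  ring

lemma add_one_div_eight_rpow_three_halves {g : ℝ} (hg : -1 / 8 ≤ g) :
    (g + 1 / 8) ^ ((3 : ℝ) / 2) = √(1 + 8 * g) ^ 3 / (16 * √2) := by
  have hsqrt : √(1 + 8 * g) = 2 * √2 * √(g + 1 / 8) := by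
    rw [show 1 + 8 * g = (2 * √2) ^ 2 * (g + 1 / 8) by
        rw [mul_pow, sq_sqrt zero_le_two]; ring,
      sqrt_mul (by positivity), sqrt_sq (by positivity)]
  rw [rpow_div_two_eq_sqrt _ (by linarith), show ((3 : ℝ)) = ((3 : ℕ) : ℝ) by norm_num,
    rpow_natCast, hsqrt]
  have : (0 : ℝ) < √2 := by positivity
  field_simp
  rw [sq_sqrt zero_le_two]
  ring

/-- `f₀(-1/8) = 3/2 - log 2`, and the singular part of `f₀` near `g_c = -1/8` behaves
as `(g - g_c)^{3/2}`: `(f₀(g) - (3/2 - log 2) - 4(g + 1/8)) / (g + 1/8)^{3/2} → -32√2/3`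
as `g → -1/8⁺`. -/
theorem stmt_13 :
    quarticFreeEnergy (-1/8) = 3/2 - Real.log 2 ∧
    Tendsto (fun g : ℝ =>
        (quarticFreeEnergy g - (3/2 - Real.log 2) - 4 * (g + 1/8))
          / (g + 1/8) ^ ((3 : ℝ)/2))
      (nhdsWithin (-1/8) (Set.Ioi (-1/8)))
      (nhds (-(32 * Real.sqrt 2) / 3)) := by
  refine ⟨quarticFreeEnergy_neg_one_div_eight, ?_⟩
  have h := (tendsto_inv_one_add_sub_one_add_log_one_add_sub_sq_div_cube.comp
    (tendsto_sqrt_one_add_eight_mul.mono_right (nhdsGT_le_nhdsNE 0))).const_mul (16 * √2)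
  rw [show 16 * √2 * (-2 / 3) = -(32 * √2) / 3 by ring] at h
  refine h.congr' ?_
  filter_upwards [self_mem_nhdsWithin] with g (hg : -1 / 8 < g)
  have hs : 0 < √(1 + 8 * g) := sqrt_pos.mpr (by linarith)
  rw [Function.comp_apply, quarticFreeEnergy_sub_eq hg.le, add_one_div_eight_rpow_three_halves hg.le]
  field_simp
end

section
/- Fix an integer m ≥ 2, let U_c := m^{−1/(m−1)}, g_c := U_c^m, and H_m := Σ_{k=1}^{m} 1/k. For g ∈ (0, g_c) define f₀(g) := (1/g)·Σ_{k=1}^{m} (1/k)·U_c^{m−k}·(U_c^k − (g_c − g)^{k/m}) − log(U_c − (g_c − g)^{1/m}). Then, as g tends to g_c from the left, the quotient (f₀(g) − (H_m − log U_c) − H_m·((g_c − g)/g_c)) / ((g_c − g)/g_c)^{(m+1)/m} tends to −m/(m+1). -/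
/-!
Substituting `t = ((g_c - g) / g_c)^(1/m)`, so that `g = g_c (1 - t^m)` and
`(g_c - g)^(k/m) = U_c^k t^k`, the free energy becomes
`f₀ = (H_m - ∑_{k ≤ m} t^k/k) / (1 - t^m) - log U_c - log (1 - t)`.
The subtracted quotient is then the sum of `(-log (1 - t) - ∑_{k ≤ m} t^k/k) / t^(m+1)`, which
tends to `1/(m+1)` by the Taylor expansion of the logarithm, and of
`(H_m t^(m-1) - ∑_{k ≤ m} t^(k-1)/k) / (1 - t^m)`, which is continuous at `t = 0` with value `-1`
because `m ≥ 2`. As `g → g_c⁻`, `t → 0⁺`.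
-/

open Filter Topology Finset

lemma sum_range_succ_pow_div_eq (n : ℕ) (t : ℝ) :
    ∑ i ∈ range (n + 1), t ^ (i + 1) / ((i : ℝ) + 1)
      = ∑ k ∈ Icc 1 n, t ^ k / (k : ℝ) + t ^ (n + 1) / ((n : ℝ) + 1) := by
  rw [sum_range_succ, ← Ico_add_one_right_eq_Icc, sum_Ico_eq_sum_range, add_tsub_cancel_right]
  simp only [Nat.cast_add, Nat.cast_one, add_comm 1]

lemma sum_Icc_pow_div_eq_mul (m : ℕ) (t : ℝ) :
    ∑ k ∈ Icc 1 m, t ^ k / (k : ℝ) = t * ∑ k ∈ Icc 1 m, t ^ (k - 1) / (k : ℝ) := by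
  rw [mul_sum]
  refine sum_congr rfl fun k hk => ?_
  rw [← mul_div_assoc, ← pow_succ', Nat.sub_add_cancel (mem_Icc.mp hk).1]

lemma sum_Icc_mul_pow_sub_eq (m : ℕ) (U t : ℝ) :
    ∑ k ∈ Icc 1 m, (1 / (k : ℝ)) * U ^ (m - k) * (U ^ k - U ^ k * t ^ k)
      = U ^ m * (∑ k ∈ Icc 1 m, (1 : ℝ) / k - ∑ k ∈ Icc 1 m, t ^ k / (k : ℝ)) := by
  rw [← sum_sub_distrib, mul_sum]
  refine sum_congr rfl fun k hk => ?_
  rw [← Nat.sub_add_cancel (mem_Icc.mp hk).2, pow_add, Nat.add_sub_cancel]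
  ring

lemma pow_rpow_natCast_div {x : ℝ} (hx : 0 ≤ x) {m : ℕ} (hm : m ≠ 0) (k : ℕ) :
    (x ^ m) ^ ((k : ℝ) / m) = x ^ k := by
  rw [← Real.rpow_natCast_mul hx, mul_div_cancel₀ _ (Nat.cast_ne_zero.mpr hm), Real.rpow_natCast]

lemma free_energy_quotient_eq {m : ℕ} (hm : m ≠ 0) {U t g H : ℝ} (hU : 0 < U) (ht0 : 0 < t)
    (ht1 : t < 1) (hg : U ^ m - g = U ^ m * t ^ m) (hH : H = ∑ k ∈ Icc 1 m, (1 : ℝ) / k) :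
    ((1 / g) * ∑ k ∈ Icc 1 m, (1 / (k : ℝ)) * U ^ (m - k) * (U ^ k - (U ^ m - g) ^ ((k : ℝ) / m))
        - Real.log (U - (U ^ m - g) ^ ((1 : ℝ) / m)) - (H - Real.log U)
        - H * ((U ^ m - g) / U ^ m)) / ((U ^ m - g) / U ^ m) ^ (((m : ℝ) + 1) / m)
      = (-Real.log (1 - t) - ∑ k ∈ Icc 1 m, t ^ k / (k : ℝ)) / t ^ (m + 1)
        + (H * t ^ (m - 1) - ∑ k ∈ Icc 1 m, t ^ (k - 1) / (k : ℝ)) / (1 - t ^ m) := by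
  have hpow : ∀ k : ℕ, (U ^ m - g) ^ ((k : ℝ) / m) = U ^ k * t ^ k := fun k => by
    rw [hg, ← mul_pow, pow_rpow_natCast_div (by positivity) hm, mul_pow]
  have hroot : (U ^ m - g) ^ ((1 : ℝ) / m) = U * t := by simpa using hpow 1
  have hx : (U ^ m - g) / U ^ m = t ^ m := by
    rw [hg]; field_simp
  have hden : (t ^ m) ^ (((m : ℝ) + 1) / m) = t ^ (m + 1) := by
    rw [← pow_rpow_natCast_div ht0.le hm (m + 1), Nat.cast_succ]
  have hlog : Real.log (U - U * t) = Real.log U + Real.log (1 - t) := by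
    rw [← Real.log_mul hU.ne' (by linarith), mul_one_sub]
  have hgt : g = U ^ m * (1 - t ^ m) := by linear_combination -hg
  have htm : t ^ m < 1 := pow_lt_one₀ ht0.le ht1 hm
  simp only [hpow]
  rw [hroot, hx, hden, hlog, sum_Icc_mul_pow_sub_eq, ← hH, hgt, sum_Icc_pow_div_eq_mul]
  obtain ⟨n, rfl⟩ := Nat.exists_eq_add_one_of_ne_zero hm
  rw [Nat.add_sub_cancel]
  have h1 : 1 - t ^ (n + 1) ≠ 0 := by linarith
  field_simp
  ring

lemma tendsto_neg_log_one_sub_sub_sum_div_pow (n : ℕ) :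
    Tendsto (fun t : ℝ => (-Real.log (1 - t) - ∑ k ∈ Icc 1 n, t ^ k / (k : ℝ)) / t ^ (n + 1))
      (𝓝[≠] 0) (𝓝 (1 / ((n : ℝ) + 1))) := by
  rw [← tendsto_sub_nhds_zero_iff]
  have hbound : Tendsto (fun t : ℝ => |t| / (1 - |t|)) (𝓝[≠] 0) (𝓝 0) := by
    have : ContinuousAt (fun t : ℝ => |t| / (1 - |t|)) 0 :=
      (continuous_abs.continuousAt).div (by fun_prop) (by norm_num)
    simpa using this.tendsto.mono_left nhdsWithin_le_nhds
  refine squeeze_zero_norm' ?_ hbound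
  have hsmall : ∀ᶠ t : ℝ in 𝓝[≠] 0, |t| < 1 := by
    refine nhdsWithin_le_nhds ?_
    simpa [Metric.ball, dist_zero_right] using Metric.ball_mem_nhds (0 : ℝ) one_pos
  filter_upwards [hsmall, self_mem_nhdsWithin] with t ht1 (ht0 : t ≠ 0)
  have hpow : |t| ^ (n + 1) ≠ 0 := pow_ne_zero _ (abs_ne_zero.mpr ht0)
  calc ‖(-Real.log (1 - t) - ∑ k ∈ Icc 1 n, t ^ k / (k : ℝ)) / t ^ (n + 1) - 1 / ((n : ℝ) + 1)‖
      = |∑ i ∈ range (n + 1), t ^ (i + 1) / ((i : ℝ) + 1) + Real.log (1 - t)|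
          / |t| ^ (n + 1) := by
        rw [sum_range_succ_pow_div_eq, Real.norm_eq_abs, ← abs_pow, ← abs_div, ← abs_neg]
        congr 1
        field_simp
        ring
    _ ≤ |t| ^ (n + 1 + 1) / (1 - |t|) / |t| ^ (n + 1) := by
        gcongr
        exact Real.abs_log_sub_add_sum_range_le ht1 (n + 1)
    _ = |t| / (1 - |t|) := by
        rw [pow_succ]
        field_simp

lemma tendsto_mul_pow_sub_sum_div_one_sub_pow {m : ℕ} (hm : 2 ≤ m) (H : ℝ) :
    Tendsto (fun t : ℝ => (H * t ^ (m - 1) - ∑ k ∈ Icc 1 m, t ^ (k - 1) / (k : ℝ)) / (1 - t ^ m))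
      (𝓝 0) (𝓝 (-1)) := by
  have hsum : ∑ k ∈ Icc 1 m, (0 : ℝ) ^ (k - 1) / (k : ℝ) = 1 := by
    rw [sum_eq_single_of_mem 1 (mem_Icc.mpr ⟨le_rfl, by omega⟩)]
    · norm_num
    · intro k hk hk1
      have : k - 1 ≠ 0 := by have := (mem_Icc.mp hk).1; omega
      simp [zero_pow this]
  have hcont : ContinuousAt
      (fun t : ℝ => (H * t ^ (m - 1) - ∑ k ∈ Icc 1 m, t ^ (k - 1) / (k : ℝ)) / (1 - t ^ m)) 0 :=
    ContinuousAt.div (by fun_prop) (by fun_prop) (by simp [zero_pow (by omega : m ≠ 0)])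
  simpa [hsum, zero_pow (by omega : m ≠ 0), zero_pow (by omega : m - 1 ≠ 0)] using hcont.tendsto

lemma tendsto_sub_div_nhdsWithin_Ioo {c : ℝ} (hc : 0 < c) :
    Tendsto (fun g : ℝ => (c - g) / c) (𝓝[Set.Ioo 0 c] c) (𝓝[Set.Ioo 0 1] 0) := by
  refine tendsto_nhdsWithin_iff.mpr ⟨?_, ?_⟩
  · have : ContinuousAt (fun g : ℝ => (c - g) / c) c := by fun_prop
    simpa using this.tendsto.mono_left nhdsWithin_le_nhds
  · filter_upwards [self_mem_nhdsWithin] with g ⟨hg0, hgc⟩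
    exact ⟨div_pos (by linarith) hc, (div_lt_one hc).mpr (by linarith)⟩

lemma tendsto_rpow_nhdsWithin_Ioo_zero {p : ℝ} (hp : 0 < p) :
    Tendsto (fun x : ℝ => x ^ p) (𝓝[Set.Ioo 0 1] 0) (𝓝[Set.Ioo 0 1] 0) := by
  refine tendsto_nhdsWithin_iff.mpr ⟨?_, ?_⟩
  · have : ContinuousAt (fun x : ℝ => x ^ p) 0 := Real.continuousAt_rpow_const 0 p (Or.inr hp.le)
    simpa [Real.zero_rpow hp.ne'] using this.tendsto.mono_left nhdsWithin_le_nhds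
  · filter_upwards [self_mem_nhdsWithin] with x ⟨hx0, hx1⟩
    exact ⟨Real.rpow_pos_of_pos hx0 p, Real.rpow_lt_one hx0.le hx1 hp⟩

/-- Order-`m` multicriticality: with `U_c = m^{-1/(m-1)}`, `g_c = U_c^m`,
`H_m = ∑_{k=1}^m 1/k` and, for `g ∈ (0, g_c)`,
`f₀(g) = (1/g)·∑_{k=1}^m (1/k)·U_c^{m-k}·(U_c^k - (g_c - g)^{k/m}) - log(U_c - (g_c - g)^{1/m})`,
one has `(f₀(g) - (H_m - log U_c) - H_m·((g_c-g)/g_c)) / ((g_c-g)/g_c)^{(m+1)/m} → -m/(m+1)`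
as `g → g_c⁻`. -/
theorem stmt_14 (m : ℕ) (hm : 2 ≤ m) (Uc gc Hm : ℝ) (f₀ : ℝ → ℝ)
    (hUc : Uc = (m : ℝ) ^ (-(1 : ℝ) / ((m : ℝ) - 1)))
    (hgc : gc = Uc ^ m)
    (hHm : Hm = ∑ k ∈ Finset.Icc 1 m, (1 : ℝ) / (k : ℝ))
    (hf : ∀ g ∈ Set.Ioo (0 : ℝ) gc,
      f₀ g = (1 / g) * ∑ k ∈ Finset.Icc 1 m,
          (1 / (k : ℝ)) * Uc ^ (m - k) * (Uc ^ k - (gc - g) ^ ((k : ℝ) / (m : ℝ)))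
        - Real.log (Uc - (gc - g) ^ ((1 : ℝ) / (m : ℝ)))) :
    Tendsto (fun g : ℝ =>
        (f₀ g - (Hm - Real.log Uc) - Hm * ((gc - g) / gc))
          / ((gc - g) / gc) ^ (((m : ℝ) + 1) / (m : ℝ)))
      (nhdsWithin gc (Set.Ioo 0 gc))
      (nhds (-(m : ℝ) / ((m : ℝ) + 1))) := by
  have hm0 : m ≠ 0 := by omega
  have hUc0 : 0 < Uc := hUc ▸ Real.rpow_pos_of_pos (by positivity) _
  subst hgc
  set τ : ℝ → ℝ := fun g => ((Uc ^ m - g) / Uc ^ m) ^ ((1 : ℝ) / m)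
  have hτ : Tendsto τ (𝓝[Set.Ioo 0 (Uc ^ m)] (Uc ^ m)) (𝓝[Set.Ioo 0 1] 0) :=
    (tendsto_rpow_nhdsWithin_Ioo_zero (by positivity)).comp
      (tendsto_sub_div_nhdsWithin_Ioo (pow_pos hUc0 m))
  have hlim := (((tendsto_neg_log_one_sub_sub_sum_div_pow m).mono_left
      (nhdsWithin_mono 0 fun t ht => ht.1.ne')).add
    ((tendsto_mul_pow_sub_sum_div_one_sub_pow hm Hm).mono_left nhdsWithin_le_nhds)).comp hτ
  rw [show 1 / ((m : ℝ) + 1) + -1 = -(m : ℝ) / ((m : ℝ) + 1) by field_simp; ring] at hlim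
  refine hlim.congr' ?_
  filter_upwards [self_mem_nhdsWithin, hτ self_mem_nhdsWithin] with g hg ⟨ht0, ht1⟩
  have hτm : τ g ^ m = (Uc ^ m - g) / Uc ^ m := by
    simp only [τ, one_div]
    exact Real.rpow_inv_natCast_pow (div_pos (by linarith [hg.2]) (by positivity)).le hm0
  have hgt : Uc ^ m - g = Uc ^ m * τ g ^ m := by
    rw [hτm]; field_simp
  rw [hf g hg]
  exact (free_energy_quotient_eq hm0 hUc0 ht0 ht1 hgt hHm).symm
end

section
/- On the polynomial ring ℝ[t_1, t_2, …] (multivariate polynomials with variables indexed by positive naturals), define for each natural number k the linear operator L_k by L_k f = ∂f/∂t_k − Σ_{n≥1} n·t_n·∂f/∂t_{n+k} (the sum is finite on every polynomial, since only finitely many partial derivatives of f are nonzero). Then for all natural numbers a and b and every polynomial f, L_a(L_b f) − L_b(L_a f) = (b − a)·L_{a+b} f. -/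
open MvPolynomial

/-- Partial derivative `∂/∂t_k` on `ℝ[t_1, t_2, …]` (variables indexed by `ℕ+`),
with the convention that `∂/∂t_0 = 0`. -/
noncomputable def partialT (k : ℕ) (f : MvPolynomial ℕ+ ℝ) : MvPolynomial ℕ+ ℝ :=
  if h : 0 < k then pderiv (⟨k, h⟩ : ℕ+) f else 0

/-- The Virasoro-type operator `L_k f = ∂f/∂t_k - ∑_{n≥1} n·t_n·∂f/∂t_{n+k}`
(the sum is finite on every polynomial). -/
noncomputable def virasoroL (k : ℕ) (f : MvPolynomial ℕ+ ℝ) : MvPolynomial ℕ+ ℝ :=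
  partialT k f - ∑ᶠ n : ℕ+, ((n : ℕ) : MvPolynomial ℕ+ ℝ) * X n * partialT ((n : ℕ) + k) f

/-! Each `L_k` is a derivation of `ℝ[t_1, t_2, …]`: on any given polynomial the sum defining it
agrees with a finite sum of the derivations `n t_n ∂_{n+k}`. Commutators of derivations are
derivations, and a derivation of a polynomial ring is determined by its values on the variables, so
it suffices to check the identity on each `t_i`, where `L_k t_i = δ_{ik} - (i - k) t_{i-k}`. -/

local notation "𝒫" => MvPolynomial ℕ+ ℝ

theorem Derivation.finset_sum_apply {R A M ι : Type*} [CommSemiring R] [CommSemiring A]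
    [AddCommMonoid M] [Algebra R A] [Module A M] [Module R M] (s : Finset ι)
    (D : ι → Derivation R A M) (a : A) : (∑ i ∈ s, D i) a = ∑ i ∈ s, D i a := by
  rw [← coeFnAddMonoidHom_apply, map_sum, Finset.sum_apply]
  rfl

namespace Virasoro

noncomputable def partialDer (k : ℕ) : Derivation ℝ 𝒫 𝒫 :=
  if h : 0 < k then pderiv (k.toPNat h) else 0

theorem partialDer_apply (k : ℕ) (f : 𝒫) : partialDer k f = partialT k f := by
  by_cases hk : 0 < k
  · rw [partialDer, dif_pos hk]
    exact (dif_pos hk : partialT k f = _).symm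
  · rw [partialDer, dif_neg hk]
    exact (dif_neg hk : partialT k f = _).symm

theorem partialDer_X (k : ℕ) (i : ℕ+) : partialDer k (X i) = if (i : ℕ) = k then 1 else 0 := by
  classical
  rw [partialDer]
  by_cases hk : 0 < k
  · rw [dif_pos hk, pderiv_X, Pi.single_apply]
    exact if_congr ⟨fun h => by rw [h]; rfl, fun h => PNat.eq h⟩ rfl rfl
  · rw [dif_neg hk, if_neg (by have := i.pos; omega)]
    rfl

theorem partialT_eq_zero {k : ℕ} {f : 𝒫} (h : ∀ i ∈ f.vars, (i : ℕ) ≠ k) :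
    partialT k f = 0 := by
  rw [← partialDer_apply]
  exact derivation_eq_zero_of_forall_mem_vars fun i hi => by rw [partialDer_X, if_neg (h i hi)]

noncomputable def truncVirasoroDer (k : ℕ) (s : Finset ℕ+) : Derivation ℝ 𝒫 𝒫 :=
  partialDer k - ∑ n ∈ s, (((n : ℕ) : 𝒫) * X n) • partialDer (n + k)

theorem virasoroL_eq_truncVirasoroDer {k : ℕ} {s : Finset ℕ+} {f : 𝒫}
    (hs : ∀ n ∉ s, ∀ i ∈ f.vars, (i : ℕ) ≠ n + k) : virasoroL k f = truncVirasoroDer k s f := by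
  simp only [virasoroL, truncVirasoroDer, Derivation.sub_apply, Derivation.finset_sum_apply,
    Derivation.smul_apply, smul_eq_mul, partialDer_apply]
  congr 1
  refine finsum_eq_sum_of_support_subset _ fun n hn => ?_
  by_contra hns
  exact hn (by simp [partialT_eq_zero (hs n hns)])

noncomputable def virasoroDer (k : ℕ) : Derivation ℝ 𝒫 𝒫 :=
  mkDerivation ℝ fun i => virasoroL k (X i)

theorem virasoroDer_X (k : ℕ) (i : ℕ+) : virasoroDer k (X i) = virasoroL k (X i) :=
  mkDerivation_X ℝ _ i

theorem virasoroDer_apply (k : ℕ) (f : 𝒫) : virasoroDer k f = virasoroL k f := by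
  set s := Finset.Iic (f.vars.sup id)
  have hs : ∀ g : 𝒫, g.vars ⊆ f.vars → virasoroL k g = truncVirasoroDer k s g := by
    refine fun g hg => virasoroL_eq_truncVirasoroDer fun n hn i hi => ?_
    simp only [s, Finset.mem_Iic, not_le] at hn
    have : (i : ℕ) < n := (Finset.le_sup (f := id) (hg hi)).trans_lt hn
    omega
  rw [hs f subset_rfl]
  refine derivation_eq_of_forall_mem_vars fun i hi => ?_
  rw [virasoroDer_X, hs _ (by simpa [vars_X] using hi)]

/-- `t_j` for every `j : ℤ`, with `t_j = 0` for `j ≤ 0`, so that `L_k t_i = δ_{ik} - (i - k) t_{i-k}`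
holds for all `i` and `k`. -/
noncomputable def tVar (j : ℤ) : 𝒫 :=
  if h : 0 < j then X (j.toNat.toPNat (by omega)) else 0

theorem tVar_of_nonpos {j : ℤ} (hj : j ≤ 0) : tVar j = 0 :=
  dif_neg (by omega)

theorem tVar_natCast (i : ℕ+) : tVar ((i : ℕ) : ℤ) = X i := by
  rw [tVar, dif_pos (by simp)]
  exact congrArg X (PNat.eq (Int.toNat_natCast _))

theorem virasoroL_X (k : ℕ) (i : ℕ+) :
    virasoroL k (X i) =
      (if ((i : ℕ) : ℤ) = k then 1 else 0) - (((i : ℕ) - k : ℤ) : 𝒫) * tVar ((i : ℕ) - k) := by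
  simp only [virasoroL, ← partialDer_apply, partialDer_X, Nat.cast_inj, mul_ite, mul_one, mul_zero]
  congr 1
  by_cases hki : k < i
  · set m : ℕ+ := ((i : ℕ) - k).toPNat (by omega)
    have hm : (m : ℕ) = i - k := rfl
    rw [finsum_eq_single _ m fun n hn => if_neg fun h => hn (PNat.eq (by omega)),
      if_pos (by omega), show ((i : ℕ) - k : ℤ) = (m : ℕ) by omega, tVar_natCast]
    norm_cast
  · rw [tVar_of_nonpos (by omega), mul_zero]
    exact finsum_eq_zero_of_forall_eq_zero fun n => if_neg (by have := n.pos; omega)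

/-- The factor `j` removes the exceptional case `j = k = 0`, where `t_0 = 0` but `δ_{jk} = 1`. -/
theorem intCast_mul_virasoroDer_tVar (k : ℕ) (j : ℤ) :
    (j : 𝒫) * virasoroDer k (tVar j) =
      j * ((if j = k then 1 else 0) - ((j - k : ℤ) : 𝒫) * tVar (j - k)) := by
  rcases le_or_gt j 0 with hj | hj
  · rw [tVar_of_nonpos hj, tVar_of_nonpos (by omega), map_zero, mul_zero, mul_zero, sub_zero]
    split_ifs with hjk
    · rw [show j = 0 by omega, Int.cast_zero, zero_mul]
    · rw [mul_zero]
  · lift j to ℕ+ using hj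
    rw [tVar_natCast, virasoroDer_X, virasoroL_X]

theorem virasoroDer_lie (a b : ℕ) :
    ⁅virasoroDer a, virasoroDer b⁆ = ((b : ℝ) - a) • virasoroDer (a + b) := by
  refine derivation_ext fun i => ?_
  have hba : ((i : ℕ) : ℤ) - b - a = (i : ℕ) - ((a + b : ℕ) : ℤ) := by push_cast; ring
  have hab : ((i : ℕ) : ℤ) - a - b = (i : ℕ) - ((a + b : ℕ) : ℤ) := by push_cast; ring
  simp only [Derivation.commutator_apply, Derivation.smul_apply, virasoroDer_X, virasoroL_X,
    map_sub, Derivation.leibniz, apply_ite (virasoroDer _), Derivation.map_one_eq_zero, map_zero,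
    Derivation.map_intCast, smul_eq_mul, mul_zero, add_zero, ite_self, zero_sub,
    intCast_mul_virasoroDer_tVar, hab, hba, smul_eq_C_mul, map_natCast]
  -- all three Kronecker deltas test `i = a + b`
  split_ifs <;> first | omega | (push_cast; ring)

end Virasoro

/-- The operators `L_k` satisfy the (half of the) Virasoro/Witt algebra:
`[L_a, L_b] = (b - a)·L_{a+b}`. -/
theorem stmt_16 (a b : ℕ) (f : MvPolynomial ℕ+ ℝ) :
    virasoroL a (virasoroL b f) - virasoroL b (virasoroL a f)
      = ((b : ℝ) - (a : ℝ)) • virasoroL (a + b) f := by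
  simpa only [Derivation.commutator_apply, Derivation.smul_apply, Virasoro.virasoroDer_apply] using
    congrArg (· f) (Virasoro.virasoroDer_lie a b)
end
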